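/- arXiv:1805.10101 — 3 statements merged into one kernel-verified Lean document; each statement's English description precedes it below -/
import Mathlib

section
/- Let $a_4\le a_2<a_1\le a_3$ be real numbers and let $b_1,b_2,b_3,b_4\in\mathbb{R}$ satisfy $b_1\le\min(b_3,b_4)\le\max(b_3,b_4)\le b_2$ (together with $a_4\le\min(a_1,a_2)\le\max(a_1,a_2)\le a_3$). Then, with $P_i=(a_i,b_i)$ and $c_1=\Delta(243)$, $c_2=\Delta(134)$, $c_3=\Delta(142)$, $c_4=\Delta(123)$ where $\Delta(ijk)=\det(P_j-P_i,P_k-P_i)$, assuming additionally $\det\begin{pmatrix}a_1-a_2&b_1-b_2\\a_3-a_4&b_3-b_4\end{pmatrix}>0$ and that all four points are distinct: $c_1\ge0$, $c_2\ge0$, $c_3\le0$, and $c_4\le0$. -/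
theorem stmt_8 (a₁ a₂ a₃ a₄ b₁ b₂ b₃ b₄ : ℝ)
    (ha : a₄ ≤ a₂ ∧ a₂ < a₁ ∧ a₁ ≤ a₃)
    (hb : b₁ ≤ min b₃ b₄ ∧ max b₃ b₄ ≤ b₂)
    (hdet : 0 < (a₁ - a₂) * (b₃ - b₄) - (b₁ - b₂) * (a₃ - a₄))
    (hdist : (a₁, b₁) ≠ (a₂, b₂) ∧ (a₁, b₁) ≠ (a₃, b₃) ∧ (a₁, b₁) ≠ (a₄, b₄) ∧
             (a₂, b₂) ≠ (a₃, b₃) ∧ (a₂, b₂) ≠ (a₄, b₄) ∧ (a₃, b₃) ≠ (a₄, b₄))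
    (c₁ c₂ c₃ c₄ : ℝ)
    (hc₁ : c₁ = (a₄ - a₂) * (b₃ - b₂) - (b₄ - b₂) * (a₃ - a₂))
    (hc₂ : c₂ = (a₃ - a₁) * (b₄ - b₁) - (b₃ - b₁) * (a₄ - a₁))
    (hc₃ : c₃ = (a₄ - a₁) * (b₂ - b₁) - (b₄ - b₁) * (a₂ - a₁))
    (hc₄ : c₄ = (a₂ - a₁) * (b₃ - b₁) - (b₂ - b₁) * (a₃ - a₁)) :
    0 ≤ c₁ ∧ 0 ≤ c₂ ∧ c₃ ≤ 0 ∧ c₄ ≤ 0 := by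
  obtain ⟨ha1, ha2, ha3⟩ := ha
  obtain ⟨hb1, hb2⟩ := hb
  have h1 : b₁ ≤ b₃ := le_trans hb1 (min_le_left _ _)
  have h2 : b₁ ≤ b₄ := le_trans hb1 (min_le_right _ _)
  have h3 : b₃ ≤ b₂ := le_trans (le_max_left _ _) hb2
  have h4 : b₄ ≤ b₂ := le_trans (le_max_right _ _) hb2
  subst hc₁ hc₂ hc₃ hc₄
  refine ⟨by nlinarith, by nlinarith, by nlinarith, by nlinarith⟩
end

section
/- Let $P_1,P_2,P_3,P_4\in\mathbb{R}^2$ with $P_i=(a_i,b_i)$, define $c_k$ as twice the signed areas $c_1=\Delta(243)$, $c_2=\Delta(134)$, $c_3=\Delta(142)$, $c_4=\Delta(123)$. Assume $a_4\le a_2<a_1\le a_3$, $b_1-b_2<0$, $b_3-b_4<0$, $\det\begin{pmatrix}a_1-a_2&b_1-b_2\\a_3-a_4&b_3-b_4\end{pmatrix}>0$, $c_3=0$, and $c_4<0$. Then $c_1\le0$ and $c_2>0$, with $c_1=0$ if and only if $P_2=P_4$. -/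
theorem stmt_9 (a₁ a₂ a₃ a₄ b₁ b₂ b₃ b₄ : ℝ)
    (ha : a₄ ≤ a₂ ∧ a₂ < a₁ ∧ a₁ ≤ a₃)
    (hb12 : b₁ - b₂ < 0) (hb34 : b₃ - b₄ < 0)
    (hdet : 0 < (a₁ - a₂) * (b₃ - b₄) - (b₁ - b₂) * (a₃ - a₄))
    (c₁ c₂ c₃ c₄ : ℝ)
    (hc₁ : c₁ = (a₄ - a₂) * (b₃ - b₂) - (b₄ - b₂) * (a₃ - a₂))
    (hc₂ : c₂ = (a₃ - a₁) * (b₄ - b₁) - (b₃ - b₁) * (a₄ - a₁))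
    (hc₃ : c₃ = (a₄ - a₁) * (b₂ - b₁) - (b₄ - b₁) * (a₂ - a₁))
    (hc₄ : c₄ = (a₂ - a₁) * (b₃ - b₁) - (b₂ - b₁) * (a₃ - a₁))
    (hc3 : c₃ = 0) (hc4 : c₄ < 0) :
    c₁ ≤ 0 ∧ 0 < c₂ ∧ (c₁ = 0 ↔ (a₂ = a₄ ∧ b₂ = b₄)) := by
  obtain ⟨h42, h21, h13⟩ := ha
  have h0 : (a₄ - a₁) * (b₂ - b₁) - (b₄ - b₁) * (a₂ - a₁) = 0 := by
    rw [← hc₃]; exact hc3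
  have pos : 0 < a₁ - a₂ := by linarith
  have key1 : (a₁ - a₂) * c₁ = (a₂ - a₄) * c₄ := by
    rw [hc₁, hc₄]; linear_combination (a₂ - a₃) * h0
  have key2 : (a₁ - a₂) * c₂ = (a₄ - a₁) * c₄ := by
    rw [hc₂, hc₄]; linear_combination (a₃ - a₁) * h0
  have hc1le : c₁ ≤ 0 := by nlinarith
  have hc2pos : 0 < c₂ := by nlinarith
  refine ⟨hc1le, hc2pos, ?_, ?_⟩
  · intro h1
    rw [h1, mul_zero] at key1
    have ha24 : a₂ = a₄ := by
      rcases mul_eq_zero.mp key1.symm with h | h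
      · linarith
      · exact absurd h (ne_of_lt hc4)
    refine ⟨ha24, ?_⟩
    rw [← ha24] at h0
    have := sub_ne_zero.mpr (ne_of_gt h21)
    have : (a₂ - a₁) * ((b₂ - b₁) - (b₄ - b₁)) = 0 := by linarith [h0]; 
    rcases mul_eq_zero.mp this with h | h
    · linarith
    · linarith
  · rintro ⟨h1, h2⟩
    rw [hc₁, ← h1, ← h2]; ring
end

section
/- Let $c_1>0$, $c_2<0$, $c_3<0$ with $c_1+c_2+c_3=0$, and let $0<\lambda<1$. Define $g:(0,1)\to\mathbb{R}$ by $g(\varepsilon)= c_1\log(\varepsilon\lambda+\tfrac{1-\varepsilon}{2}) + c_2\log(\tfrac{1-\varepsilon}{2}) + c_3\log(\varepsilon(1-\lambda))$. Then $g$ attains its minimum on $(0,1)$ at $\varepsilon^*=\frac{c_3}{c_3+2\lambda c_2}$, and $g(\varepsilon^*)=c_3\log\frac{1-\lambda}{\lambda}+\log\frac{(-c_2)^{c_2}(-c_3)^{c_3}}{(-c_2-c_3)^{c_2+c_3}}$. -/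
/-!
Put `p = -c₂`, `q = -c₃`, `x = (1 - ε) / 2` and `y = λε`, so that `c₁ = p + q`, the first argument
of `g` is `x + y` and the last one is `((1 - λ) / λ) y`. Then `g ε` is the claimed minimum plus the
gap in the two-term log-sum inequality `p log (x / p) + q log (y / q) ≤ (p + q) log ((x + y) / (p + q))`.
The gap is nonnegative by concavity of `log`, and vanishes when `x / p = y / q`, i.e. at `ε = ε*`.
-/

open Real Set

noncomputable def logSumGap (p q x y : ℝ) : ℝ :=
  (p + q) * log ((x + y) / (p + q)) - p * log (x / p) - q * log (y / q)

theorem logSumGap_nonneg {p q x y : ℝ} (hp : 0 < p) (hq : 0 < q) (hx : 0 < x) (hy : 0 < y) :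
    0 ≤ logSumGap p q x y := by
  set r := (x + y) / (p + q)
  have hr : 0 < r := by positivity
  have tangent : ∀ u, 0 < u → log u ≤ log r + u / r - 1 := fun u hu => by
    have := log_le_sub_one_of_pos (div_pos hu hr)
    rw [log_div hu.ne' hr.ne'] at this
    linarith
  have hr_mul : r * (p + q) = x + y := div_mul_cancel₀ _ (by positivity)
  have hsum : p * (log r + x / p / r - 1) + q * (log r + y / q / r - 1) = (p + q) * log r := by
    field_simp
    linear_combination (-1) * hr_mul
  have := add_le_add (mul_le_mul_of_nonneg_left (tangent _ (div_pos hx hp)) hp.le)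
    (mul_le_mul_of_nonneg_left (tangent _ (div_pos hy hq)) hq.le)
  unfold logSumGap
  linarith

theorem logSumGap_mul_mul {p q : ℝ} (t : ℝ) (hp : p ≠ 0) (hq : q ≠ 0) (hpq : p + q ≠ 0) :
    logSumGap p q (t * p) (t * q) = 0 := by
  unfold logSumGap
  rw [← mul_add, mul_div_cancel_right₀ t hpq, mul_div_cancel_right₀ t hp,
    mul_div_cancel_right₀ t hq]
  ring

theorem log_rpow_mul_rpow_div_rpow {a b c : ℝ} (x y z : ℝ) (ha : 0 < a) (hb : 0 < b) (hc : 0 < c) :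
    log (a ^ x * b ^ y / c ^ z) = x * log a + y * log b - z * log c := by
  rw [log_div (by positivity) (by positivity), log_mul (by positivity) (by positivity),
    log_rpow ha, log_rpow hb, log_rpow hc]

theorem mul_log_add_mul_log_add_mul_log_eq {c₁ c₂ c₃ κ x y : ℝ} (h₂ : c₂ < 0) (h₃ : c₃ < 0)
    (hsum : c₁ + c₂ + c₃ = 0) (hκ : 0 < κ) (hx : 0 < x) (hy : 0 < y) :
    c₁ * log (x + y) + c₂ * log x + c₃ * log (κ * y)
      = c₃ * log κ + log ((-c₂) ^ c₂ * (-c₃) ^ c₃ / (-c₂ - c₃) ^ (c₂ + c₃))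
        + logSumGap (-c₂) (-c₃) x y := by
  have hp : 0 < -c₂ := neg_pos.mpr h₂
  have hq : 0 < -c₃ := neg_pos.mpr h₃
  have hc₁ : c₁ = -c₂ - c₃ := by linarith
  rw [log_rpow_mul_rpow_div_rpow _ _ _ hp hq (by linarith), logSumGap, ← sub_eq_add_neg,
    log_div (by positivity) (by linarith), log_div hx.ne' hp.ne', log_div hy.ne' hq.ne',
    log_mul hκ.ne' hy.ne', hc₁]
  ring

theorem stmt_13_general (c₁ c₂ c₃ : ℝ) (h₂ : c₂ < 0) (h₃ : c₃ < 0)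
    (hsum : c₁ + c₂ + c₃ = 0) (lam : ℝ) (hlam : 0 < lam ∧ lam < 1)
    (g : ℝ → ℝ)
    (hg : ∀ ε, g ε = c₁ * Real.log (ε * lam + (1 - ε) / 2)
      + c₂ * Real.log ((1 - ε) / 2) + c₃ * Real.log (ε * (1 - lam))) :
    c₃ / (c₃ + 2 * lam * c₂) ∈ Set.Ioo (0 : ℝ) 1 ∧
    (∀ ε ∈ Set.Ioo (0 : ℝ) 1, g (c₃ / (c₃ + 2 * lam * c₂)) ≤ g ε) ∧
    g (c₃ / (c₃ + 2 * lam * c₂))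
      = c₃ * Real.log ((1 - lam) / lam)
        + Real.log ((-c₂) ^ c₂ * (-c₃) ^ c₃ / (-c₂ - c₃) ^ (c₂ + c₃)) := by
  obtain ⟨hl₀, hl₁⟩ := hlam
  have hD : c₃ + 2 * lam * c₂ < 0 := by nlinarith
  have hg_eq : ∀ ε ∈ Ioo (0 : ℝ) 1, g ε = c₃ * log ((1 - lam) / lam)
      + log ((-c₂) ^ c₂ * (-c₃) ^ c₃ / (-c₂ - c₃) ^ (c₂ + c₃))
      + logSumGap (-c₂) (-c₃) ((1 - ε) / 2) (lam * ε) := by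
    rintro ε ⟨hε₀, hε₁⟩
    have hx : ε * lam + (1 - ε) / 2 = (1 - ε) / 2 + lam * ε := by ring
    have hy : ε * (1 - lam) = (1 - lam) / lam * (lam * ε) := by field_simp
    rw [hg, hx, hy]
    exact mul_log_add_mul_log_add_mul_log_eq h₂ h₃ hsum (div_pos (by linarith) hl₀)
      (by linarith) (by positivity)
  have hε : c₃ / (c₃ + 2 * lam * c₂) ∈ Ioo (0 : ℝ) 1 :=
    ⟨div_pos_of_neg_of_neg h₃ hD, (div_lt_one_of_neg hD).mpr (by nlinarith)⟩
  have hgap : logSumGap (-c₂) (-c₃) ((1 - c₃ / (c₃ + 2 * lam * c₂)) / 2)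
      (lam * (c₃ / (c₃ + 2 * lam * c₂))) = 0 := by
    have hx : (1 - c₃ / (c₃ + 2 * lam * c₂)) / 2 = lam / (c₃ + 2 * lam * c₂) * c₂ := by
      have := hD.ne
      field_simp
      ring
    have hy : lam * (c₃ / (c₃ + 2 * lam * c₂)) = lam / (c₃ + 2 * lam * c₂) * c₃ := by ring
    rw [hx, hy, ← neg_mul_neg, ← neg_mul_neg (lam / _) c₃]
    exact logSumGap_mul_mul _ (by linarith) (by linarith) (by linarith)
  have hmin := hg_eq _ hε
  rw [hgap, add_zero] at hmin
  refine ⟨hε, fun ε hε' => ?_, hmin⟩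
  rw [hmin, hg_eq ε hε']
  exact le_add_of_nonneg_right (logSumGap_nonneg (by linarith) (by linarith)
    (by linarith [hε'.2]) (mul_pos hl₀ hε'.1))

theorem stmt_13 (c₁ c₂ c₃ : ℝ) (h₁ : 0 < c₁) (h₂ : c₂ < 0) (h₃ : c₃ < 0)
    (hsum : c₁ + c₂ + c₃ = 0) (lam : ℝ) (hlam : 0 < lam ∧ lam < 1)
    (g : ℝ → ℝ)
    (hg : ∀ ε, g ε = c₁ * Real.log (ε * lam + (1 - ε) / 2)
      + c₂ * Real.log ((1 - ε) / 2) + c₃ * Real.log (ε * (1 - lam))) :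
    c₃ / (c₃ + 2 * lam * c₂) ∈ Set.Ioo (0 : ℝ) 1 ∧
    (∀ ε ∈ Set.Ioo (0 : ℝ) 1, g (c₃ / (c₃ + 2 * lam * c₂)) ≤ g ε) ∧
    g (c₃ / (c₃ + 2 * lam * c₂))
      = c₃ * Real.log ((1 - lam) / lam)
        + Real.log ((-c₂) ^ c₂ * (-c₃) ^ c₃ / (-c₂ - c₃) ^ (c₂ + c₃)) :=
  stmt_13_general c₁ c₂ c₃ h₂ h₃ hsum lam hlam g hg
end
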